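/- Let U be a unitary representation of a finite group G decomposing as U_g ≅ ⊕_i D^i(g) ⊗ 1_{m_i} with irreducible components D^i of dimensions d_i and multiplicities m_i, and define Δ = (1/|G|) ⊕_i (d_i/m_i) 1_{d_i} ⊗ 1_{m_i}. Then for every g ∈ G, Σ_{h∈G} tr(U_{g h⁻¹} Δ) · U_h = U_g. -/

import Mathlib

/-! Averaging `σ h * E * ρ h⁻¹` over `G` produces an intertwiner from `ρ` to `σ`, so by the two
Schur hypotheses it vanishes between distinct blocks and is the scalar `|G| tr E / d` on a block of
dimension `d`. Read entrywise this is Schur orthogonality of matrix coefficients,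
`∑_h tr(A D^i(h⁻¹)) D^j(h) = δ_ij (|G| / d_j) A`. As `tr(U_k Δ) = |G|⁻¹ ∑_i d_i tr D^i(k)`,
taking `A = D^j(g)` shows that the `j`-th isotypic block of the sum is `D^j(g) ⊗ 1`. -/

open scoped Kronecker

theorem MonoidHom.map_inv_mul_map {G M : Type*} [Group G] [Monoid M] (ρ : G →* M) (g : G) :
    ρ g⁻¹ * ρ g = 1 := by
  rw [← map_mul, inv_mul_cancel, map_one]

namespace Matrix

theorem sum_smul_blockDiagonal'_kronecker {β ι R : Type*} [Fintype β] [DecidableEq ι]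
    [CommSemiring R] {n n' m m' : ι → Type*}
    (c : β → R) (M : β → ∀ i, Matrix (n i) (n' i) R) (B : ∀ i, Matrix (m i) (m' i) R) :
    ∑ x, c x • blockDiagonal' (fun i => M x i ⊗ₖ B i)
      = blockDiagonal' (fun i => (∑ x, c x • M x i) ⊗ₖ B i) := by
  ext ⟨i, a, p⟩ ⟨j, b, q⟩
  rw [sum_apply]
  by_cases hij : i = j
  · subst hij
    simp [blockDiagonal'_apply_eq, sum_apply, Finset.sum_mul, mul_assoc]
  · simp [blockDiagonal'_apply_ne _ _ _ hij]

section Average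

variable {G R m n : Type*} [Group G] [Fintype G] [CommRing R] [Fintype m] [Fintype n]
  [DecidableEq m] [DecidableEq n]

def twirl (σ : G →* Matrix m m R) (ρ : G →* Matrix n n R) (E : Matrix m n R) : Matrix m n R :=
  ∑ h, σ h * E * ρ h⁻¹

theorem twirl_intertwines (σ : G →* Matrix m m R) (ρ : G →* Matrix n n R) (E : Matrix m n R)
    (g : G) : σ g * twirl σ ρ E = twirl σ ρ E * ρ g := by
  rw [twirl, Matrix.mul_sum, Matrix.sum_mul]
  refine Fintype.sum_equiv (Equiv.mulLeft g) _ _ fun h => ?_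
  change σ g * (σ h * E * ρ h⁻¹) = σ (g * h) * E * ρ (g * h)⁻¹ * ρ g
  rw [_root_.mul_inv_rev, _root_.map_mul, _root_.map_mul]
  simp only [Matrix.mul_assoc, ρ.map_inv_mul_map, Matrix.mul_one]

theorem trace_twirl_self (ρ : G →* Matrix n n R) (E : Matrix n n R) :
    trace (twirl ρ ρ E) = Fintype.card G • trace E := by
  simp only [twirl, trace_sum, trace_mul_cycle _ E, ρ.map_inv_mul_map, Matrix.one_mul,
    Finset.sum_const, Finset.card_univ]

theorem card_smul_twirl_self (ρ : G →* Matrix n n R)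
    (hirr : ∀ X : Matrix n n R, (∀ g, ρ g * X = X * ρ g) → ∃ c : R, X = c • 1)
    (E : Matrix n n R) :
    (Fintype.card n : R) • twirl ρ ρ E = (Fintype.card G * trace E) • 1 := by
  obtain ⟨c, hc⟩ := hirr _ (twirl_intertwines ρ ρ E)
  have htrace := trace_twirl_self ρ E
  rw [hc, trace_smul, trace_one, smul_eq_mul, nsmul_eq_mul] at htrace
  rw [hc, smul_smul, mul_comm, htrace]

theorem twirl_single_apply (σ : G →* Matrix m m R) (ρ : G →* Matrix n n R)
    (c : m) (b : n) (r : m) (a : n) :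
    twirl σ ρ (single c b 1) r a = ∑ h, σ h r c * ρ h⁻¹ b a := by
  simp [twirl, sum_apply, mul_apply, single_apply, ite_and]

theorem sum_trace_mul_smul_apply (σ : G →* Matrix m m R) (ρ : G →* Matrix n n R)
    (A : Matrix n n R) (r c : m) :
    (∑ h, trace (A * ρ h⁻¹) • σ h) r c = ∑ a, ∑ b, A a b * twirl σ ρ (single c b 1) r a := by
  simp only [twirl_single_apply, sum_apply, smul_apply, smul_eq_mul, trace, diag, mul_apply,
    Finset.sum_mul, Finset.mul_sum]
  rw [Finset.sum_comm]
  refine Finset.sum_congr rfl fun a _ => ?_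
  rw [Finset.sum_comm]
  refine Finset.sum_congr rfl fun b _ => Finset.sum_congr rfl fun h _ => by ring

theorem sum_trace_mul_smul_eq_zero (σ : G →* Matrix m m R) (ρ : G →* Matrix n n R)
    (hdisj : ∀ T : Matrix m n R, (∀ g, σ g * T = T * ρ g) → T = 0) (A : Matrix n n R) :
    ∑ h, trace (A * ρ h⁻¹) • σ h = 0 := by
  ext r c
  simp [sum_trace_mul_smul_apply, hdisj _ (twirl_intertwines σ ρ _)]

theorem card_smul_sum_trace_mul_smul_self (ρ : G →* Matrix n n R)
    (hirr : ∀ X : Matrix n n R, (∀ g, ρ g * X = X * ρ g) → ∃ c : R, X = c • 1)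
    (A : Matrix n n R) :
    (Fintype.card n : R) • ∑ h, trace (A * ρ h⁻¹) • ρ h = (Fintype.card G : R) • A := by
  ext r c
  have hentry (a b) := congrFun₂ (card_smul_twirl_self ρ hirr (single c b 1)) r a
  simp only [smul_apply, smul_eq_mul] at hentry
  simp only [smul_apply, smul_eq_mul, sum_trace_mul_smul_apply, Finset.mul_sum,
    mul_left_comm _ (A _ _), hentry]
  simp [one_apply, trace, single_apply, ite_and, mul_comm]

theorem sum_card_mul_trace_smul_eq_card_smul {ι : Type*} [Fintype ι] [DecidableEq ι]
    {n : ι → Type*} [∀ i, Fintype (n i)] [∀ i, DecidableEq (n i)]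
    (ρ : ∀ i, G →* Matrix (n i) (n i) R)
    (hirr : ∀ i (X : Matrix (n i) (n i) R), (∀ g, ρ i g * X = X * ρ i g) → ∃ c : R, X = c • 1)
    (hdisj : ∀ i j, i ≠ j → ∀ T : Matrix (n i) (n j) R, (∀ g, ρ i g * T = T * ρ j g) → T = 0)
    (g : G) (j : ι) :
    ∑ h, (∑ i, (Fintype.card (n i) : R) * trace (ρ i (g * h⁻¹))) • ρ j h
      = (Fintype.card G : R) • ρ j g := by
  calc ∑ h, (∑ i, (Fintype.card (n i) : R) * trace (ρ i (g * h⁻¹))) • ρ j h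
      = ∑ i, (Fintype.card (n i) : R) • ∑ h, trace (ρ i g * ρ i h⁻¹) • ρ j h := by
        simp only [_root_.map_mul, Finset.sum_smul, mul_smul, Finset.smul_sum]
        exact Finset.sum_comm
    _ = (Fintype.card (n j) : R) • ∑ h, trace (ρ j g * ρ j h⁻¹) • ρ j h := by
        refine Finset.sum_eq_single j (fun i _ hij => ?_) (by simp)
        rw [sum_trace_mul_smul_eq_zero (ρ j) (ρ i) (hdisj j i hij.symm), smul_zero]
    _ = (Fintype.card G : R) • ρ j g := card_smul_sum_trace_mul_smul_self (ρ j) (hirr j) _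

end Average

end Matrix

open Matrix

theorem sum_trace_delta_reproduces_rep_general
    {G : Type*} [Group G] [Fintype G] {I : Type*} [Fintype I] [DecidableEq I]
    (d m : I → ℕ) (hm : ∀ i, 0 < m i)
    (D : ∀ i, G →* Matrix.unitaryGroup (Fin (d i)) ℂ)
    (hirr : ∀ i (X : Matrix (Fin (d i)) (Fin (d i)) ℂ),
      (∀ g, (D i g : Matrix (Fin (d i)) (Fin (d i)) ℂ) * X
          = X * (D i g : Matrix (Fin (d i)) (Fin (d i)) ℂ)) → ∃ c : ℂ, X = c • 1)
    (hdisj : ∀ i j, i ≠ j → ∀ T : Matrix (Fin (d i)) (Fin (d j)) ℂ,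
      (∀ g, (D i g : Matrix (Fin (d i)) (Fin (d i)) ℂ) * T
          = T * (D j g : Matrix (Fin (d j)) (Fin (d j)) ℂ)) → T = 0)
    (U : G → Matrix (Σ i, Fin (d i) × Fin (m i)) (Σ i, Fin (d i) × Fin (m i)) ℂ)
    (hU : ∀ g, U g = Matrix.blockDiagonal' (fun i =>
      Matrix.kroneckerMap (· * ·) (D i g : Matrix (Fin (d i)) (Fin (d i)) ℂ)
        (1 : Matrix (Fin (m i)) (Fin (m i)) ℂ)))
    (Δ : Matrix (Σ i, Fin (d i) × Fin (m i)) (Σ i, Fin (d i) × Fin (m i)) ℂ)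
    (hΔ : Δ = Matrix.blockDiagonal' (fun i =>
      ((d i : ℂ) / ((m i : ℂ) * (Fintype.card G : ℂ)))
        • (1 : Matrix (Fin (d i) × Fin (m i)) (Fin (d i) × Fin (m i)) ℂ)))
    (g : G) :
    ∑ h : G, (Matrix.trace (U (g * h⁻¹) * Δ)) • U h = U g := by
  have hcard : (Fintype.card G : ℂ) ≠ 0 := Nat.cast_ne_zero.mpr Fintype.card_ne_zero
  have htrace (k : G) : trace (U k * Δ) = (Fintype.card G : ℂ)⁻¹ *
      ∑ i, (d i : ℂ) * trace (D i k : Matrix (Fin (d i)) (Fin (d i)) ℂ) := by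
    rw [hU, hΔ, ← blockDiagonal'_mul, trace_blockDiagonal', Finset.mul_sum]
    refine Finset.sum_congr rfl fun i _ => ?_
    have hmi : (m i : ℂ) ≠ 0 := Nat.cast_ne_zero.mpr (hm i).ne'
    rw [Matrix.mul_smul, Matrix.mul_one, trace_smul, trace_kronecker, trace_one, Fintype.card_fin,
      smul_eq_mul]
    field_simp
  simp_rw [htrace, hU]
  rw [sum_smul_blockDiagonal'_kronecker]
  congr 1
  funext j
  congr 1
  have hblock := sum_card_mul_trace_smul_eq_card_smul (fun i => (unitary _).subtype.comp (D i))
    hirr hdisj g j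
  simp only [Fintype.card_fin, MonoidHom.comp_apply, Submonoid.subtype_apply] at hblock
  simp only [mul_smul, ← Finset.smul_sum]
  rw [hblock]
  exact inv_smul_smul₀ hcard _

/-- Let U be a unitary representation of a finite group G with isotypic
decomposition U_g = ⊕_i D^i(g) ⊗ 1_{m_i}, where the D^i are pairwise non-isomorphic
irreducible unitary representations of dimensions d_i with multiplicities m_i, and let
Δ = (1/|G|) ⊕_i (d_i/m_i) 1_{d_i} ⊗ 1_{m_i}.  Then for every g ∈ G,
Σ_h tr(U_{g h⁻¹} Δ) • U_h = U_g.  Irreducibility of D^i is expressed by its commutant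
consisting of scalars (Schur), and non-isomorphy by the absence of nonzero intertwiners. -/
theorem sum_trace_delta_reproduces_rep
    {G : Type*} [Group G] [Fintype G] {I : Type*} [Fintype I] [DecidableEq I]
    (d m : I → ℕ) (hd : ∀ i, 0 < d i) (hm : ∀ i, 0 < m i)
    (D : ∀ i, G →* Matrix.unitaryGroup (Fin (d i)) ℂ)
    (hirr : ∀ i (X : Matrix (Fin (d i)) (Fin (d i)) ℂ),
      (∀ g, (D i g : Matrix (Fin (d i)) (Fin (d i)) ℂ) * X
          = X * (D i g : Matrix (Fin (d i)) (Fin (d i)) ℂ)) → ∃ c : ℂ, X = c • 1)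
    (hdisj : ∀ i j, i ≠ j → ∀ T : Matrix (Fin (d i)) (Fin (d j)) ℂ,
      (∀ g, (D i g : Matrix (Fin (d i)) (Fin (d i)) ℂ) * T
          = T * (D j g : Matrix (Fin (d j)) (Fin (d j)) ℂ)) → T = 0)
    (U : G → Matrix (Σ i, Fin (d i) × Fin (m i)) (Σ i, Fin (d i) × Fin (m i)) ℂ)
    (hU : ∀ g, U g = Matrix.blockDiagonal' (fun i =>
      Matrix.kroneckerMap (· * ·) (D i g : Matrix (Fin (d i)) (Fin (d i)) ℂ)
        (1 : Matrix (Fin (m i)) (Fin (m i)) ℂ)))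
    (Δ : Matrix (Σ i, Fin (d i) × Fin (m i)) (Σ i, Fin (d i) × Fin (m i)) ℂ)
    (hΔ : Δ = Matrix.blockDiagonal' (fun i =>
      ((d i : ℂ) / ((m i : ℂ) * (Fintype.card G : ℂ)))
        • (1 : Matrix (Fin (d i) × Fin (m i)) (Fin (d i) × Fin (m i)) ℂ)))
    (g : G) :
    ∑ h : G, (Matrix.trace (U (g * h⁻¹) * Δ)) • U h = U g :=
  sum_trace_delta_reproduces_rep_general d m hm D hirr hdisj U hU Δ hΔ g
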